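/- Let W ∈ L(H) be a positive operator and A, B ∈ L(H) operators with closed range such that ker B = ker(A*W), and let T be the shorted operator of W to range A. Then T is a lower bound for the set {(AXB − I)*W(AXB − I) : X ∈ L(H)} with respect to the minus order (i.e. T ⁻≤ (AXB − I)*W(AXB − I) for every X ∈ L(H)) if and only if the pair (W, ker T) is compatible. -/

import Mathlib

open ContinuousLinearMap
open scoped ComplexInnerProductSpace

noncomputable section

variable {H : Type*} [NormedAddCommGroup H] [InnerProductSpace ℂ H] [CompleteSpace H]

/-- `M(W,S)`: the set of operators `X` with `0 ≤ X ≤ W` (Loewner order) and `range X ⊆ S^⊥`. -/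
def MSet (W : H →L[ℂ] H) (S : Submodule ℂ H) : Set (H →L[ℂ] H) :=
  {X | X.IsPositive ∧ (W - X).IsPositive ∧ LinearMap.range (X : H →ₗ[ℂ] H) ≤ Sᗮ}

/-- `T` is the shorted operator of `W` to `S`, i.e. the maximum of `M(W,S)` in the Loewner
order. -/
def IsShorted (W : H →L[ℂ] H) (S : Submodule ℂ H) (T : H →L[ℂ] H) : Prop :=
  T ∈ MSet W S ∧ ∀ X ∈ MSet W S, (T - X).IsPositive

/-- The minus order: `A ⁻≤ B` iff there are bounded idempotents `P, Q` with `A = PB` and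
`A* = QB*`. -/
def MinusLE (A B : H →L[ℂ] H) : Prop :=
  ∃ P Q : H →L[ℂ] H, IsIdempotentElem P ∧ IsIdempotentElem Q ∧
    A = P ∘L B ∧ adjoint A = Q ∘L adjoint B

/-- The pair `(W, N)` is compatible: there is a bounded idempotent `Q` with range `N` such that
`WQ` is selfadjoint. -/
def Compatible (W : H →L[ℂ] H) (N : Submodule ℂ H) : Prop :=
  ∃ Q : H →L[ℂ] H, IsIdempotentElem Q ∧ LinearMap.range (Q : H →ₗ[ℂ] H) = N ∧ IsSelfAdjoint (W ∘L Q)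

/-- `M⁻(W,S)`: operators `X` with `X ⁻≤ W`, `range X ⊆ S^⊥` and `range X* ⊆ S^⊥`. -/
def MMinusSet (W : H →L[ℂ] H) (S : Submodule ℂ H) : Set (H →L[ℂ] H) :=
  {X | MinusLE X W ∧ LinearMap.range (X : H →ₗ[ℂ] H) ≤ Sᗮ ∧ LinearMap.range (adjoint X : H →ₗ[ℂ] H) ≤ Sᗮ}

/-- `X₀` is a `W`-inverse of `M` in `R(C)`: for every `x`, `X₀ x` is a `W`-weighted least squares
solution of `M z = C x`. -/
def WInverseIn (W M C X₀ : H →L[ℂ] H) : Prop :=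
  ∀ x z : H, (⟪W (M (X₀ x) - C x), M (X₀ x) - C x⟫).re ≤ (⟪W (M z - C x), M z - C x⟫).re

/-- The left weighted star order `A ₋*_W≤ B`. -/
def LStarW (W A B : H →L[ℂ] H) : Prop :=
  LinearMap.range (B : H →ₗ[ℂ] H) = LinearMap.range (A : H →ₗ[ℂ] H) ⊔ LinearMap.range (B - A : H →ₗ[ℂ] H) ∧
  LinearMap.range (A : H →ₗ[ℂ] H) ⊓ LinearMap.range (B - A : H →ₗ[ℂ] H) = ⊥ ∧
  LinearMap.range (B - A : H →ₗ[ℂ] H) ≤ LinearMap.ker (adjoint A ∘L W : H →ₗ[ℂ] H)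

/-- The right weighted star order `A ≤*_W B`. -/
def RStarW (W A B : H →L[ℂ] H) : Prop :=
  LinearMap.range (adjoint B : H →ₗ[ℂ] H) =
    LinearMap.range (adjoint A : H →ₗ[ℂ] H) ⊔ LinearMap.range (adjoint B - adjoint A : H →ₗ[ℂ] H) ∧
  LinearMap.range (adjoint A : H →ₗ[ℂ] H) ⊓ LinearMap.range (adjoint B - adjoint A : H →ₗ[ℂ] H) = ⊥ ∧
  LinearMap.range (adjoint B - adjoint A : H →ₗ[ℂ] H) ≤ LinearMap.ker (A ∘L W : H →ₗ[ℂ] H)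

/-- The weighted star order `A *_W≤ B`. -/
def StarW (W A B : H →L[ℂ] H) : Prop :=
  LStarW W A B ∧ RStarW W A B

/-! If `T ⁻≤ W` (the case `X = 0`), say `T = PW` with `P` idempotent, then `Q = 1 - P*(1 - E)`,
for any idempotent `E` onto `ker T`, is an idempotent onto `ker T` with `WQ = W - T`.

Conversely, let `Q` be an idempotent onto `ker T` with `WQ` selfadjoint. Then
`W(1 - Q) = (1 - Q)* W (1 - Q)` lies in `M(W, range A)` and dominates `(1 - Q)* T (1 - Q) = T`,
so `T = W(1 - Q)`. Hence `A* W (1 - Q) = A* T = 0`, so `B(1 - Q) = 0` by `ker B = ker (A* W)`, and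
with `C = AXB - 1` we get `C* W C (1 - Q) = T`; the idempotent `(1 - Q)*` then witnesses
`T ⁻≤ C* W C`. -/

open LinearMap (IsProj)

section StarRing

variable {R : Type*}

lemma star_mul_eq_mul_of_isSelfAdjoint [Mul R] [StarMul R] {W Q : R} (hW : IsSelfAdjoint W)
    (hWQ : IsSelfAdjoint (W * Q)) : star Q * W = W * Q := by
  rw [← hWQ.star_eq, star_mul, hW.star_eq]

lemma star_mul_mul_eq_mul_of_isSelfAdjoint [Semigroup R] [StarMul R] {W Q : R}
    (hW : IsSelfAdjoint W) (hQ : IsIdempotentElem Q) (hWQ : IsSelfAdjoint (W * Q)) :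
    star Q * W * Q = W * Q := by
  rw [star_mul_eq_mul_of_isSelfAdjoint hW hWQ, mul_assoc, hQ.eq]

lemma star_mul_mul_one_sub_eq_zero [Ring R] [StarRing R] {W Q : R}
    (hW : IsSelfAdjoint W) (hQ : IsIdempotentElem Q) (hWQ : IsSelfAdjoint (W * Q)) :
    star Q * W * (1 - Q) = 0 := by
  rw [mul_sub, mul_one, star_mul_mul_eq_mul_of_isSelfAdjoint hW hQ hWQ,
    star_mul_eq_mul_of_isSelfAdjoint hW hWQ, sub_self]

end StarRing

namespace ContinuousLinearMap

lemma range_le_orthogonal_range_iff {𝕜 E F G : Type*} [RCLike 𝕜] [NormedAddCommGroup E]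
    [NormedAddCommGroup F] [NormedAddCommGroup G] [InnerProductSpace 𝕜 E] [InnerProductSpace 𝕜 F]
    [InnerProductSpace 𝕜 G] [CompleteSpace F] [CompleteSpace G] {T : E →L[𝕜] F} {A : G →L[𝕜] F} :
    LinearMap.range (T : E →ₗ[𝕜] F) ≤ (LinearMap.range (A : G →ₗ[𝕜] F))ᗮ ↔
      adjoint A ∘L T = 0 := by
  rw [orthogonal_range, LinearMap.range_le_ker_iff, ← toLinearMap_comp, ← toLinearMap_zero,
    coe_inj]

end ContinuousLinearMap

lemma compatible_of_isProj {W Q : H →L[ℂ] H} {N : Submodule ℂ H}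
    (hQ : IsProj N (Q : H →ₗ[ℂ] H)) (hWQ : IsSelfAdjoint (W * Q)) : Compatible W N :=
  ⟨Q, isIdempotentElem_toLinearMap_iff.mp hQ.isIdempotentElem, hQ.range, hWQ⟩

lemma minusLE_of_mul_eq {T M E : H →L[ℂ] H} (hT : IsSelfAdjoint T) (hM : IsSelfAdjoint M)
    (hE : IsIdempotentElem E) (h : M * E = T) : MinusLE T M := by
  have hEM : T = star E * M := by rw [← hT.star_eq, ← h, star_mul, hM.star_eq]
  refine ⟨star E, star E, IsIdempotentElem.star_iff.mpr hE, IsIdempotentElem.star_iff.mpr hE,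
    hEM, ?_⟩
  rw [← star_eq_adjoint, ← star_eq_adjoint, hT.star_eq, hM.star_eq]
  exact hEM

theorem MinusLE.compatible_ker {T W : H →L[ℂ] H} (hT : IsSelfAdjoint T) (hW : IsSelfAdjoint W)
    (h : MinusLE T W) : Compatible W (LinearMap.ker (T : H →ₗ[ℂ] H)) := by
  obtain ⟨P, -, hP, -, hTPW, -⟩ := h
  change T = P * W at hTPW
  have hWP : W * star P = T := by rw [← hT.star_eq, hTPW, star_mul, hW.star_eq]
  have hPT : P * T = T := by rw [hTPW, ← mul_assoc, hP.eq]
  have hTP : T * star P = T := by rw [← hT.star_eq, ← star_mul, hPT]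
  set K := LinearMap.ker (T : H →ₗ[ℂ] H)
  have : CompleteSpace K := (isClosed_ker T).completeSpace_coe
  set E := K.starProjection
  have hTE : T * E = 0 := ext fun x => K.starProjection_apply_mem x
  set Q := 1 - star P * (1 - E)
  have hTQ : T * Q = 0 := by
    rw [mul_sub, mul_one, ← mul_assoc, hTP, mul_sub, mul_one, hTE, sub_zero, sub_self]
  have hWQ : W * Q = W - T := by
    rw [mul_sub, mul_one, ← mul_assoc, hWP, mul_sub, mul_one, hTE, sub_zero]
  refine compatible_of_isProj ⟨fun x => ?_, fun v hv => ?_⟩ (hWQ ▸ hW.sub hT)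
  · exact congr($hTQ x)
  · change v - star P (v - E v) = v
    rw [K.starProjection_eq_self_iff.mpr hv, sub_self, map_zero, sub_zero]

lemma IsShorted.le_ker {W T : H →L[ℂ] H} {S : Submodule ℂ H} (hT : IsShorted W S T) :
    S ≤ LinearMap.ker (T : H →ₗ[ℂ] H) :=
  calc S ≤ (LinearMap.range (T : H →ₗ[ℂ] H))ᗮ :=
        Submodule.isOrtho_iff_le.mp (Submodule.isOrtho_iff_le.mpr hT.1.2.2).symm
    _ = LinearMap.ker (T : H →ₗ[ℂ] H) := by
        rw [orthogonal_range, hT.1.1.isSelfAdjoint.adjoint_eq]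

theorem IsShorted.eq_mul_one_sub {W T Q : H →L[ℂ] H} {S : Submodule ℂ H} (hW : W.IsPositive)
    (hT : IsShorted W S T) (hQ : IsIdempotentElem Q)
    (hQT : LinearMap.range (Q : H →ₗ[ℂ] H) = LinearMap.ker (T : H →ₗ[ℂ] H))
    (hWQ : IsSelfAdjoint (W * Q)) : T = W * (1 - Q) := by
  have hWsa := hW.isSelfAdjoint
  have hWE : IsSelfAdjoint (W * (1 - Q)) := by rw [mul_sub, mul_one]; exact hWsa.sub hWQ
  have hDnonneg : 0 ≤ W * (1 - Q) := by
    rw [← star_mul_mul_eq_mul_of_isSelfAdjoint hWsa hQ.one_sub hWE]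
    exact star_left_conjugate_nonneg ((nonneg_iff_isPositive W).mpr hW) _
  have hDle : W * (1 - Q) ≤ W := by
    rw [← sub_nonneg, mul_sub, mul_one, sub_sub_cancel,
      ← star_mul_mul_eq_mul_of_isSelfAdjoint hWsa hQ hWQ]
    exact star_left_conjugate_nonneg ((nonneg_iff_isPositive W).mpr hW) _
  have hDrange : LinearMap.range ((W * (1 - Q) : H →L[ℂ] H) : H →ₗ[ℂ] H) ≤ Sᗮ :=
    calc _ ≤ (LinearMap.range (Q : H →ₗ[ℂ] H))ᗮ := by
          rw [range_le_orthogonal_range_iff, ← star_eq_adjoint, ← mul_def, ← mul_assoc]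
          exact star_mul_mul_one_sub_eq_zero hWsa hQ hWQ
      _ ≤ Sᗮ := Submodule.orthogonal_le (hQT ▸ hT.le_ker)
  have hDT : W * (1 - Q) ≤ T :=
    hT.2 _ ⟨(nonneg_iff_isPositive _).mp hDnonneg, hDle, hDrange⟩
  have hTQ : T * Q = 0 := ext fun x => (hQT ▸ LinearMap.mem_range_self (Q : H →ₗ[ℂ] H) x :)
  have hTconj : star (1 - Q) * T * (1 - Q) = T := by
    have hTsa := hT.1.1.isSelfAdjoint
    rw [star_mul_mul_eq_mul_of_isSelfAdjoint hTsa hQ.one_sub (by rwa [mul_sub, mul_one, hTQ,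
      sub_zero]), mul_sub, mul_one, hTQ, sub_zero]
  have hTD : T ≤ W * (1 - Q) := by
    rw [← hTconj, ← star_mul_mul_eq_mul_of_isSelfAdjoint hWsa hQ.one_sub hWE]
    exact star_left_conjugate_le_conjugate hT.1.2.1 _
  exact le_antisymm hTD hDT

theorem IsShorted.minusLE_of_compatible {W A B T : H →L[ℂ] H} (hW : W.IsPositive)
    (hker : LinearMap.ker (B : H →ₗ[ℂ] H) = LinearMap.ker (adjoint A ∘L W : H →ₗ[ℂ] H))
    (hT : IsShorted W (LinearMap.range (A : H →ₗ[ℂ] H)) T)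
    (hc : Compatible W (LinearMap.ker (T : H →ₗ[ℂ] H))) (X : H →L[ℂ] H) :
    MinusLE T (adjoint (A ∘L X ∘L B - 1) ∘L (W ∘L (A ∘L X ∘L B - 1))) := by
  obtain ⟨Q, hQ, hQT, hWQ⟩ := hc
  have hTE : T = W * (1 - Q) := hT.eq_mul_one_sub hW hQ hQT hWQ
  have hAT : star A * T = 0 := range_le_orthogonal_range_iff.mp hT.1.2.2
  have hBE : B * (1 - Q) = 0 := by
    ext x
    have : (1 - Q) x ∈ LinearMap.ker (adjoint A ∘L W : H →ₗ[ℂ] H) := by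
      change (star A * (W * (1 - Q))) x = 0
      rw [← hTE, hAT, zero_apply]
    rw [← hker] at this
    exact this
  set C := A ∘L X ∘L B - 1
  have hCE : C * (1 - Q) = -(1 - Q) := by
    change (A * (X * B) - 1) * (1 - Q) = _
    rw [sub_mul, one_mul, mul_assoc, mul_assoc, hBE, mul_zero, mul_zero, zero_sub]
  have hCT : star C * T = -T := by
    change star (A * (X * B) - 1) * T = _
    rw [star_sub, star_one, sub_mul, one_mul, star_mul, mul_assoc, hAT, mul_zero, zero_sub]
  refine minusLE_of_mul_eq hT.1.1.isSelfAdjoint (hW.adjoint_conj C).isSelfAdjoint hQ.one_sub ?_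
  calc star C * (W * C) * (1 - Q) = star C * (W * (C * (1 - Q))) := by simp only [mul_assoc]
    _ = T := by rw [hCE, mul_neg, ← hTE, mul_neg, hCT, neg_neg]

theorem stmt7_general (W A B T : H →L[ℂ] H) (hW : W.IsPositive)
    (hker : LinearMap.ker (B : H →ₗ[ℂ] H) = LinearMap.ker (adjoint A ∘L W : H →ₗ[ℂ] H))
    (hT : IsShorted W (LinearMap.range (A : H →ₗ[ℂ] H)) T) :
    (∀ X : H →L[ℂ] H,
        MinusLE T (adjoint (A ∘L X ∘L B - 1) ∘L (W ∘L (A ∘L X ∘L B - 1)))) ↔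
      Compatible W (LinearMap.ker (T : H →ₗ[ℂ] H)) := by
  refine ⟨fun h => ?_, fun hc X => hT.minusLE_of_compatible hW hker hc X⟩
  have hW0 : adjoint (A ∘L 0 ∘L B - 1) ∘L (W ∘L (A ∘L 0 ∘L B - 1)) = W := by
    simp [← star_eq_adjoint, ← mul_def]
  exact (hW0 ▸ h 0).compatible_ker hT.1.1.isSelfAdjoint hW.isSelfAdjoint

/-- `T` is a minus-order lower bound of `{(AXB - I)* W (AXB - I)}` iff
`(W, ker T)` is compatible. -/
theorem stmt7 (W A B T : H →L[ℂ] H) (hW : W.IsPositive)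
    (hA : IsClosed (LinearMap.range (A : H →ₗ[ℂ] H) : Set H)) (hB : IsClosed (LinearMap.range (B : H →ₗ[ℂ] H) : Set H))
    (hker : LinearMap.ker (B : H →ₗ[ℂ] H) = LinearMap.ker (adjoint A ∘L W : H →ₗ[ℂ] H))
    (hT : IsShorted W (LinearMap.range (A : H →ₗ[ℂ] H)) T) :
    (∀ X : H →L[ℂ] H,
        MinusLE T (adjoint (A ∘L X ∘L B - 1) ∘L (W ∘L (A ∘L X ∘L B - 1)))) ↔
      Compatible W (LinearMap.ker (T : H →ₗ[ℂ] H)) :=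
  stmt7_general W A B T hW hker hT
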